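/- Let M = (Q, Σ, Γ, Δ) be a pushdown system whose ε-rules are all deterministic and popping, with Q = {q1,…,qm}, and let G_M be the first-order grammar obtained by the translation that preprocesses silent steps (using T(pYγ) = T(qγ) when pY is unstable with ε-rule pY →_ε q). Then for all configurations pγ, qγ' of M: pγ ≈ qγ' in L_M if and only if T(pγ) ∼ T(qγ') in L_{G_M}. -/

import Mathlib

open scoped ENat

noncomputable section

namespace FOG

/-- A node label: a nonterminal or a variable (variable `x_{i+1}` has index `i`). -/
abbrev Sym (Nt : Type) := Nt ⊕ ℕ

/-- A (pre)term over the nonterminals `Nt` and the variables, given by its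
(partial) labelling of tree positions; possibly infinite terms are allowed. -/
abbrev PreTerm (Nt : Type) := List ℕ → Option (Sym Nt)

variable {Nt : Type}

/-- the term consisting of the single variable `x_{i+1}` -/
def varPre (i : ℕ) : PreTerm Nt := fun p => if p = [] then some (Sum.inr i) else none

/-- the subterm of `E` rooted at position `p` -/
def subAt (E : PreTerm Nt) (p : List ℕ) : PreTerm Nt := fun q => E (p ++ q)

/-- the positions (nodes) of a term -/
def positions (E : PreTerm Nt) : Set (List ℕ) := {p | E p ≠ none}

/-- the set of subterms of a term -/
def subterms (E : PreTerm Nt) : Set (PreTerm Nt) := {F | ∃ p, E p ≠ none ∧ F = subAt E p}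

/-- the size `|E|` of a term: its number of distinct subterms -/
def size1 (E : PreTerm Nt) : ℕ := (subterms E).ncard

/-- `|E,F|`: the number of distinct subterms of `E` and `F` together -/
def size2 (E F : PreTerm Nt) : ℕ := (subterms E ∪ subterms F).ncard

/-- the set of (indices of) variables occurring in a term -/
def varsOf (E : PreTerm Nt) : Set ℕ := {i | ∃ p, E p = some (Sum.inr i)}

/-- `vars(E,F)` -/
def vars2 (E F : PreTerm Nt) : Set ℕ := varsOf E ∪ varsOf F

/-- the number of distinct subterms of `E` whose root label is a nonterminal -/
def ntcount (E : PreTerm Nt) : ℕ :=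
  {F | F ∈ subterms E ∧ ∃ A : Nt, F [] = some (Sum.inl A)}.ncard

/-- the height of a (finite) term -/
def heightP (E : PreTerm Nt) : ℕ := sSup {n | ∃ p ∈ positions E, p.length = n}

/-- Well-formedness: the root is labelled, and a child position `p ++ [i]` is
labelled iff `p` carries a nonterminal of arity `> i`; variables are leaves. -/
def IsTerm (ar : Nt → ℕ) (E : PreTerm Nt) : Prop :=
  E [] ≠ none ∧ ∀ p i, (E (p ++ [i]) ≠ none ↔ ∃ A, E p = some (Sum.inl A) ∧ i < ar A)

/-- a regular term: a term with finitely many distinct subterms -/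
def IsRegTerm (ar : Nt → ℕ) (E : PreTerm Nt) : Prop := IsTerm ar E ∧ (subterms E).Finite

/-- a finite term -/
def IsFinTerm (ar : Nt → ℕ) (E : PreTerm Nt) : Prop := IsTerm ar E ∧ (positions E).Finite

/-- does an (optional) label carry a variable? -/
def isVarLabel : Option (Sym Nt) → Bool
  | some (Sum.inr _) => true
  | _ => false

/-- The term `Eσ` obtained by applying the substitution `σ` to `E`:  at a position
`p = p₁ ++ p₂` where `p₁` is the (unique, if any) prefix of `p` at which `E` carries
a variable `x`, the label is that of `σ(x)` at `p₂`; elsewhere it is that of `E`. -/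
def substPre (E : PreTerm Nt) (σ : ℕ → PreTerm Nt) : PreTerm Nt := fun p =>
  match (List.range (p.length + 1)).find? (fun k => isVarLabel (E (p.take k))) with
  | some k =>
    match E (p.take k) with
    | some (Sum.inr i) => σ i (p.drop k)
    | _ => none
  | none => E p

/-- the term `A(x_1,…,x_k)σ`, whose root is `A` and whose `j`-th child is `σ(x_{j+1})` -/
def headTerm (A : Nt) (k : ℕ) (σ : ℕ → PreTerm Nt) : PreTerm Nt := fun p =>
  match p with
  | [] => some (Sum.inl A)
  | j :: p' => if j < k then σ j p' else none

/-- a rule `A(x_1,…,x_{ar(A)}) →_a E` of a first-order grammar -/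
structure GRule (Nt Act : Type) where
  lhsA : Nt
  act : Act
  rhs : PreTerm Nt

/-- a first-order grammar `G = (N, Σ, R)` -/
structure Grammar where
  Nt : Type
  Act : Type
  ar : Nt → ℕ
  rules : Set (GRule Nt Act)

/-- Well-formedness of a first-order grammar: the ranked alphabet `N` and the action
alphabet `Σ` are finite, there are finitely many rules, and each right-hand side is a
finite term all of whose variables are among `x_1, …, x_{ar(A)}` for the
left-hand-side nonterminal `A`. -/
def Grammar.WF (G : Grammar) : Prop :=
  Finite G.Nt ∧ Finite G.Act ∧ G.rules.Finite ∧
    ∀ r ∈ G.rules, IsFinTerm G.ar r.rhs ∧ varsOf r.rhs ⊆ {i | i < G.ar r.lhsA}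

/-- The transition relation of the labelled transition system `L_G`: each rule
`A(x_1,…,x_{ar(A)}) →_a E` induces `A(x_1,…,x_{ar(A)})σ →_a Eσ` for every
substitution `σ`. -/
def gstepP (G : Grammar) (a : G.Act) (E F : PreTerm G.Nt) : Prop :=
  ∃ r ∈ G.rules, r.act = a ∧
    ∃ σ : ℕ → PreTerm G.Nt, E = headTerm r.lhsA (G.ar r.lhsA) σ ∧ F = substPre r.rhs σ

/-- The transition relation of `L_G` augmented with a self-loop `x →_{a_x} x` with
a fresh action `a_x` for every variable `x` (so that `el(x,E) = 0` for `E ≠ x`). -/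
def gstepA (G : Grammar) : G.Act ⊕ ℕ → PreTerm G.Nt → PreTerm G.Nt → Prop
  | Sum.inl a => gstepP G a
  | Sum.inr i => fun E F => E = varPre i ∧ F = varPre i

section LTS

variable {Act S : Type*}

/-- `R` is a (strong) bisimulation for the transition relation `tr` -/
def IsBisim (tr : Act → S → S → Prop) (R : S → S → Prop) : Prop :=
  ∀ s t, R s t →
    (∀ a s', tr a s s' → ∃ t', tr a t t' ∧ R s' t') ∧
    (∀ a t', tr a t t' → ∃ s', tr a s s' ∧ R s' t')

/-- bisimilarity: the largest bisimulation -/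
def Bisim (tr : Act → S → S → Prop) (s t : S) : Prop := ∃ R, IsBisim tr R ∧ R s t

/-- the approximants `∼_k` of bisimilarity -/
def approx (tr : Act → S → S → Prop) : ℕ → S → S → Prop
  | 0 => fun _ _ => True
  | k + 1 => fun s t => approx tr k s t ∧
      (∀ a s', tr a s s' → ∃ t', tr a t t' ∧ approx tr k s' t') ∧
      (∀ a t', tr a t t' → ∃ s', tr a s s' ∧ approx tr k s' t')

/-- the equivalence level `el(s,t) = sup {k ∈ ℕ | s ∼_k t} ∈ ℕ ∪ {ω}` -/
def elev (tr : Act → S → S → Prop) (s t : S) : ℕ∞ :=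
  sSup {e : ℕ∞ | ∃ k : ℕ, approx tr k s t ∧ e = (k : ℕ∞)}

end LTS

/-- the size `|G|` of a grammar -/
def gsize (G : Grammar) : ℕ := ∑ᶠ r ∈ G.rules, (G.ar r.lhsA + 1 + size1 r.rhs)

/-- `m`: the maximal arity of a nonterminal -/
def maxAr (G : Grammar) : ℕ := sSup (Set.range G.ar)

/-- `hinc`: the maximal height increase in one transition step -/
def hinc (G : Grammar) : ℕ := sSup {k | ∃ r ∈ G.rules, k = heightP r.rhs - 1}

/-- `sinc`: the maximal size increase in one transition step -/
def sinc (G : Grammar) : ℕ := sSup {k | ∃ r ∈ G.rules, k = ntcount r.rhs}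

end FOG

namespace PDS

/-- a transition rule `pY →_a qγ` of a pushdown system (`a = none` means `ε`) -/
structure PRule (Q Act Γ : Type) where
  p : Q
  Y : Γ
  a : Option Act
  q : Q
  out : List Γ

/-- The transition relation of the LTS `L_M` generated by a pushdown system with
rule set `Δ`: each rule `pY →_a qγ` induces `pYγ' →_a qγγ'` for all `γ' ∈ Γ*`. -/
def pstep {Q Act Γ : Type} (Δ : Set (PRule Q Act Γ)) :
    Option Act → Q × List Γ → Q × List Γ → Prop := fun a s t =>
  ∃ r ∈ Δ, r.a = a ∧ ∃ γ' : List Γ, s = (r.p, r.Y :: γ') ∧ t = (r.q, r.out ++ γ')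

section Weak

variable {A S T : Type*}

/-- `s ⇒_a t` (for `a = ε` an arbitrary sequence of silent steps, for `a ∈ Σ` a
visible step surrounded by silent steps) -/
def wstep (tr : Option A → S → S → Prop) : Option A → S → S → Prop
  | none => Relation.ReflTransGen (tr none)
  | some a => fun s t => ∃ u v, Relation.ReflTransGen (tr none) s u ∧
      tr (some a) u v ∧ Relation.ReflTransGen (tr none) v t

/-- `R` is a weak bisimulation -/
def IsWeakBisim (tr : Option A → S → S → Prop) (R : S → S → Prop) : Prop :=
  ∀ s t, R s t →
    (∀ a s', tr a s s' → ∃ t', wstep tr a t t' ∧ R s' t') ∧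
    (∀ a t', tr a t t' → ∃ s', wstep tr a s s' ∧ R s' t')

/-- weak bisimilarity `≈`: the largest weak bisimulation -/
def WeakBisim (tr : Option A → S → S → Prop) (s t : S) : Prop :=
  ∃ R, IsWeakBisim tr R ∧ R s t

/-- the disjoint union of two labelled transition systems -/
def sumStep (t1 : A → S → S → Prop) (t2 : A → T → T → Prop) :
    A → S ⊕ T → S ⊕ T → Prop
  | a, Sum.inl s, Sum.inl s' => t1 a s s'
  | a, Sum.inr t, Sum.inr t' => t2 a t t'
  | _, _, _ => False

/-- regard an LTS without silent actions as one with (unused) silent actions -/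
def liftTr (tr : A → S → S → Prop) : Option A → S → S → Prop
  | none => fun _ _ => False
  | some a => tr a

end Weak

end PDS

namespace PDS2G

open FOG PDS

/-- nonterminals of the grammar `G_M`: `[q]` of arity `0` and `[qY]` of arity `m` -/
abbrev NtM (m : ℕ) (Γ : Type) := Fin m ⊕ (Fin m × Γ)

/-- arities of the nonterminals of `G_M` -/
def arM (m : ℕ) (Γ : Type) : NtM m Γ → ℕ := Sum.elim (fun _ => 0) (fun _ => m)

variable {m : ℕ} {Act Γ : Type}

/-- `pY` is unstable: some `ε`-rule has left-hand side `pY` -/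
def Unstable (Δ : Set (PRule (Fin m) Act Γ)) (p : Fin m) (Y : Γ) : Prop :=
  ∃ r ∈ Δ, r.p = p ∧ r.Y = Y ∧ r.a = none

/-- The encoding `T(pγ)` of a configuration as a term, preprocessing the
(deterministic, popping) silent steps:  `T(pε) = [p]`;
`T(pYγ) = [pY](T(q₁γ),…,T(q_mγ))` if `pY` is stable; and `T(pYγ) = T(qγ)` if `pY`
is unstable with the unique `ε`-rule `pY →_ε q`. -/
noncomputable def Tpre (Δ : Set (PRule (Fin m) Act Γ)) :
    List Γ → Fin m → PreTerm (NtM m Γ)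
  | [], p => fun pos => if pos = [] then some (Sum.inl (Sum.inl p)) else none
  | Y :: γ, p =>
    letI : Decidable (Unstable Δ p Y) := Classical.propDecidable _
    if h : Unstable Δ p Y then Tpre Δ γ h.choose.q
    else fun pos =>
      match pos with
      | [] => some (Sum.inl (Sum.inr (p, Y)))
      | j :: pos' => if hj : j < m then Tpre Δ γ ⟨j, hj⟩ pos' else none

/-- the encoding `T(pγx)` with a trailing stack variable `x` (`T(q_ix) = x_i`),
preprocessing silent steps -/
noncomputable def Txpre (Δ : Set (PRule (Fin m) Act Γ)) :
    List Γ → Fin m → PreTerm (NtM m Γ)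
  | [], p => varPre p.val
  | Y :: γ, p =>
    letI : Decidable (Unstable Δ p Y) := Classical.propDecidable _
    if h : Unstable Δ p Y then Txpre Δ γ h.choose.q
    else fun pos =>
      match pos with
      | [] => some (Sum.inl (Sum.inr (p, Y)))
      | j :: pos' => if hj : j < m then Txpre Δ γ ⟨j, hj⟩ pos' else none

/-- the first-order grammar `G_M` obtained from a pushdown system `M` whose
`ε`-rules are deterministic and popping: each PDS rule `pY →_a qγ` with `a ∈ Σ`
yields the grammar rule `T(pYx) →_a T(qγx)` -/
noncomputable def GMpre (Δ : Set (PRule (Fin m) Act Γ)) : FOG.Grammar where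
  Nt := NtM m Γ
  Act := Act
  ar := arM m Γ
  rules := {gr | ∃ r ∈ Δ, ∃ a : Act, r.a = some a ∧
    gr = ⟨Sum.inr (r.p, r.Y), a, Txpre Δ r.out r.q⟩}

end PDS2G

/-!
Since the silent rules are deterministic and popping, the encoding already performs them:
`T` is constant along silent steps. A stable configuration `pYγ` is encoded as
`[pY](T(q₁γ),…,T(q_mγ))`, the instance of the left-hand side `[pY](x₁,…,x_m)` under
`xᵢ ↦ T(qᵢγ)`, so the steps of `T(s)` are exactly the images `T(s')` of the weak visible
steps `s ⇒_a s'`. For any map with these two properties, `s ≈ t` iff `T(s) ∼ T(t)`.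
-/

namespace FOG

section Subst

variable {Nt : Type}

lemma substPre_varPre (i : ℕ) (σ : ℕ → PreTerm Nt) : substPre (varPre i) σ = σ i := by
  funext p
  unfold substPre
  rw [List.range_succ_eq_map, List.find?_cons_of_pos]
  · simp [varPre]
  · simp [varPre, isVarLabel]

lemma substPre_nil_of_not_isVarLabel {E : PreTerm Nt} (σ : ℕ → PreTerm Nt)
    (h : isVarLabel (E []) = false) : substPre E σ [] = E [] := by
  unfold substPre
  rw [List.range_succ_eq_map, List.find?_cons_of_neg]
  · simp
  · simp [h]

lemma substPre_cons_of_not_isVarLabel {E : PreTerm Nt} (σ : ℕ → PreTerm Nt)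
    (h : isVarLabel (E []) = false) (j : ℕ) (p : List ℕ) :
    substPre E σ (j :: p) = substPre (subAt E [j]) σ p := by
  unfold substPre
  rw [List.length_cons, List.range_succ_eq_map, List.find?_cons_of_neg, List.find?_map]
  · have hshift : ((fun k => isVarLabel (E ((j :: p).take k))) ∘ Nat.succ) =
        fun k => isVarLabel (subAt E [j] (p.take k)) := by
      funext k
      simp [subAt]
    rw [hshift]
    rcases List.find? (fun k => isVarLabel (subAt E [j] (p.take k)))
      (List.range (p.length + 1)) with _ | k <;> simp [subAt]
  · simp [h]

lemma substPre_empty (σ : ℕ → PreTerm Nt) : substPre (fun _ => none) σ = fun _ => none := by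
  funext p
  unfold substPre
  rw [List.find?_eq_none.mpr (by simp [isVarLabel])]

lemma substPre_headTerm (A : Nt) (k : ℕ) (τ σ : ℕ → PreTerm Nt) :
    substPre (headTerm A k τ) σ = headTerm A k (fun j => substPre (τ j) σ) := by
  have hroot : isVarLabel (headTerm A k τ []) = false := rfl
  funext p
  rcases p with _ | ⟨j, p⟩
  · exact substPre_nil_of_not_isVarLabel σ hroot
  · rw [substPre_cons_of_not_isVarLabel σ hroot]
    by_cases hj : j < k
    · have hchild : subAt (headTerm A k τ) [j] = τ j := by
        funext q
        simp [subAt, headTerm, hj]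
      simp [hchild, headTerm, hj]
    · have hchild : subAt (headTerm A k τ) [j] = fun _ => none := by
        funext q
        simp [subAt, headTerm, hj]
      simp [hchild, substPre_empty, headTerm, hj]

lemma headTerm_congr (A : Nt) {k : ℕ} {σ τ : ℕ → PreTerm Nt} (h : ∀ j < k, σ j = τ j) :
    headTerm A k σ = headTerm A k τ := by
  funext p
  rcases p with _ | ⟨j, p⟩
  · rfl
  · by_cases hj : j < k <;> simp [headTerm, hj, h]

lemma eq_of_headTerm_eq {A B : Nt} {k : ℕ} {σ τ : ℕ → PreTerm Nt}
    (h : headTerm A k σ = headTerm B k τ) : A = B ∧ ∀ j < k, σ j = τ j := by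
  refine ⟨by simpa [headTerm] using congrFun h [], fun j hj => ?_⟩
  funext p
  simpa [headTerm, hj] using congrFun h (j :: p)

end Subst

section Bisim

variable {Act S : Type*} {tr : Act → S → S → Prop}

lemma isBisim_bisim : IsBisim tr (Bisim tr) := by
  rintro s t ⟨R, hR, hst⟩
  refine ⟨fun a s' h => ?_, fun a t' h => ?_⟩
  · obtain ⟨t', ht', hR'⟩ := (hR s t hst).1 a s' h
    exact ⟨t', ht', R, hR, hR'⟩
  · obtain ⟨s', hs', hR'⟩ := (hR s t hst).2 a t' h
    exact ⟨s', hs', R, hR, hR'⟩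

lemma Bisim.symm {s t : S} (h : Bisim tr s t) : Bisim tr t s := by
  obtain ⟨R, hR, hst⟩ := h
  exact ⟨flip R, fun x y hxy => ⟨(hR y x hxy).2, (hR y x hxy).1⟩, hst⟩

lemma isBisim_of_symmetric {R : S → S → Prop} (hsymm : ∀ s t, R s t → R t s)
    (hforth : ∀ s t, R s t → ∀ a s', tr a s s' → ∃ t', tr a t t' ∧ R s' t') :
    IsBisim tr R := by
  refine fun s t hst => ⟨hforth s t hst, fun a t' ht => ?_⟩
  obtain ⟨s', hs', hR⟩ := hforth t s (hsymm s t hst) a t' ht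
  exact ⟨s', hs', hsymm t' s' hR⟩

end Bisim

end FOG

namespace PDS

section WeakBisim

variable {A S : Type*} {tr : Option A → S → S → Prop}

lemma isWeakBisim_weakBisim : IsWeakBisim tr (WeakBisim tr) := by
  rintro s t ⟨R, hR, hst⟩
  refine ⟨fun a s' h => ?_, fun a t' h => ?_⟩
  · obtain ⟨t', ht', hR'⟩ := (hR s t hst).1 a s' h
    exact ⟨t', ht', R, hR, hR'⟩
  · obtain ⟨s', hs', hR'⟩ := (hR s t hst).2 a t' h
    exact ⟨s', hs', R, hR, hR'⟩

lemma WeakBisim.symm {s t : S} (h : WeakBisim tr s t) : WeakBisim tr t s := by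
  obtain ⟨R, hR, hst⟩ := h
  exact ⟨flip R, fun x y hxy => ⟨(hR y x hxy).2, (hR y x hxy).1⟩, hst⟩

lemma isWeakBisim_of_symmetric {R : S → S → Prop} (hsymm : ∀ s t, R s t → R t s)
    (hforth : ∀ s t, R s t → ∀ a s', tr a s s' → ∃ t', wstep tr a t t' ∧ R s' t') :
    IsWeakBisim tr R := by
  refine fun s t hst => ⟨hforth s t hst, fun a t' ht => ?_⟩
  obtain ⟨s', hs', hR⟩ := hforth t s (hsymm s t hst) a t' ht
  exact ⟨s', hs', hsymm t' s' hR⟩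

lemma WeakBisim.exists_silent {s s' t : S} (h : WeakBisim tr s t)
    (hs : Relation.ReflTransGen (tr none) s s') :
    ∃ t', Relation.ReflTransGen (tr none) t t' ∧ WeakBisim tr s' t' := by
  induction hs with
  | refl => exact ⟨t, .refl, h⟩
  | tail _ hstep ih =>
    obtain ⟨t', ht', h'⟩ := ih
    obtain ⟨t'', ht'', h''⟩ := (isWeakBisim_weakBisim _ _ h').1 none _ hstep
    exact ⟨t'', ht'.trans ht'', h''⟩

lemma WeakBisim.exists_wstep {s s' t : S} {a : Option A} (h : WeakBisim tr s t)
    (hs : wstep tr a s s') : ∃ t', wstep tr a t t' ∧ WeakBisim tr s' t' := by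
  rcases a with _ | a
  · exact h.exists_silent hs
  · obtain ⟨u, v, hsu, huv, hvs'⟩ := hs
    obtain ⟨t₁, ht₁, h₁⟩ := h.exists_silent hsu
    obtain ⟨t₂, ⟨u', v', ht₁u', hu'v', hv't₂⟩, h₂⟩ :=
      (isWeakBisim_weakBisim _ _ h₁).1 (some a) v huv
    obtain ⟨t₃, ht₃, h₃⟩ := h₂.exists_silent hvs'
    exact ⟨t₃, ⟨u', v', ht₁.trans ht₁u', hu'v', hv't₂.trans ht₃⟩, h₃⟩

end WeakBisim

open FOG in
theorem weakBisim_iff_bisim_of_collapse {A S X : Type*} {tr : Option A → S → S → Prop}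
    {g : A → X → X → Prop} {T : S → X}
    (hsilent : ∀ s s', tr none s s' → T s = T s')
    (hvisible : ∀ a s s', tr (some a) s s' → g a (T s) (T s'))
    (hreflect : ∀ a s E, g a (T s) E → ∃ s', wstep tr (some a) s s' ∧ E = T s')
    (s t : S) : WeakBisim tr s t ↔ Bisim g (T s) (T t) := by
  have hsilents : ∀ s s', Relation.ReflTransGen (tr none) s s' → T s = T s' := by
    intro s s' h
    induction h with
    | refl => rfl
    | tail _ hstep ih => exact ih.trans (hsilent _ _ hstep)
  constructor
  · intro h
    refine ⟨fun E F => ∃ s t, WeakBisim tr s t ∧ E = T s ∧ F = T t, ?_, s, t, h, rfl, rfl⟩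
    refine isBisim_of_symmetric (fun E F ⟨s, t, h, hE, hF⟩ => ⟨t, s, h.symm, hF, hE⟩) ?_
    rintro _ _ ⟨s, t, h, rfl, rfl⟩ a E hE
    obtain ⟨s', hs', rfl⟩ := hreflect a s E hE
    obtain ⟨t', ⟨u, v, htu, huv, hvt'⟩, h'⟩ := h.exists_wstep hs'
    refine ⟨T t', ?_, s', t', h', rfl, rfl⟩
    rw [hsilents _ _ htu, ← hsilents _ _ hvt']
    exact hvisible a u v huv
  · intro h
    refine ⟨fun s t => Bisim g (T s) (T t), ?_, h⟩
    refine isWeakBisim_of_symmetric (fun s t h => h.symm) ?_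
    rintro s t h (_ | a) s' hs'
    · exact ⟨t, .refl, hsilent s s' hs' ▸ h⟩
    · obtain ⟨F, hF, h'⟩ := (isBisim_bisim _ _ h).1 a _ (hvisible a s s' hs')
      obtain ⟨t', ht', rfl⟩ := hreflect a t F hF
      exact ⟨t', ht', h'⟩

end PDS

namespace PDS2G

open FOG PDS

variable {m : ℕ} {Act Γ : Type}

/-- The value at `j ≥ m` is junk, never read by `headTerm _ m`. -/
def finArgs {Nt : Type} (f : Fin m → PreTerm Nt) (j : ℕ) : PreTerm Nt :=
  if hj : j < m then f ⟨j, hj⟩ else fun _ => none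

lemma finArgs_of_lt {Nt : Type} (f : Fin m → PreTerm Nt) {j : ℕ} (hj : j < m) :
    finArgs f j = f ⟨j, hj⟩ :=
  dif_pos hj

section Encoding

variable (Δ : Set (PRule (Fin m) Act Γ))

lemma Tpre_cons_of_unstable {p : Fin m} {Y : Γ} (h : Unstable Δ p Y) (γ : List Γ) :
    Tpre Δ (Y :: γ) p = Tpre Δ γ h.choose.q := by
  rw [Tpre, dif_pos h]

lemma Tpre_cons_of_stable {p : Fin m} {Y : Γ} (h : ¬ Unstable Δ p Y) (γ : List Γ) :
    Tpre Δ (Y :: γ) p = headTerm (Sum.inr (p, Y)) m (finArgs (Tpre Δ γ)) := by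
  rw [Tpre, dif_neg h]
  funext pos
  rcases pos with _ | ⟨j, pos⟩
  · rfl
  · by_cases hj : j < m <;> simp [headTerm, finArgs, hj]

lemma Txpre_cons_of_unstable {p : Fin m} {Y : Γ} (h : Unstable Δ p Y) (γ : List Γ) :
    Txpre Δ (Y :: γ) p = Txpre Δ γ h.choose.q := by
  rw [Txpre, dif_pos h]

lemma Txpre_cons_of_stable {p : Fin m} {Y : Γ} (h : ¬ Unstable Δ p Y) (γ : List Γ) :
    Txpre Δ (Y :: γ) p = headTerm (Sum.inr (p, Y)) m (finArgs (Txpre Δ γ)) := by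
  rw [Txpre, dif_neg h]
  funext pos
  rcases pos with _ | ⟨j, pos⟩
  · rfl
  · by_cases hj : j < m <;> simp [headTerm, finArgs, hj]

lemma substPre_Txpre {γ : List Γ} {σ : ℕ → PreTerm (NtM m Γ)}
    (hσ : ∀ i : Fin m, σ i = Tpre Δ γ i) (δ : List Γ) (q : Fin m) :
    substPre (Txpre Δ δ q) σ = Tpre Δ (δ ++ γ) q := by
  induction δ generalizing q with
  | nil => exact (substPre_varPre _ σ).trans (hσ q)
  | cons Y δ ih =>
    by_cases h : Unstable Δ q Y
    · rw [Txpre_cons_of_unstable Δ h, List.cons_append, Tpre_cons_of_unstable Δ h, ih]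
    · rw [Txpre_cons_of_stable Δ h, List.cons_append, Tpre_cons_of_stable Δ h,
        substPre_headTerm]
      exact headTerm_congr _ fun j hj => by rw [finArgs_of_lt _ hj, finArgs_of_lt _ hj, ih]

lemma exists_pstep_of_gstepP_stable {p : Fin m} {Y : Γ} (h : ¬ Unstable Δ p Y) {γ : List Γ}
    {a : Act} {E : PreTerm (NtM m Γ)} (hstep : gstepP (GMpre Δ) a (Tpre Δ (Y :: γ) p) E) :
    ∃ s', pstep Δ (some a) (p, Y :: γ) s' ∧ E = Tpre Δ s'.2 s'.1 := by
  obtain ⟨_, ⟨r, hr, a, ha, rfl⟩, rfl, σ, hsrc, rfl⟩ := hstep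
  rw [Tpre_cons_of_stable Δ h] at hsrc
  obtain ⟨hpY, hσ⟩ := eq_of_headTerm_eq hsrc
  obtain ⟨rfl, rfl⟩ := Prod.ext_iff.mp (Sum.inr_injective hpY)
  refine ⟨(r.q, r.out ++ γ), ⟨r, hr, ha, γ, rfl, rfl⟩, ?_⟩
  exact substPre_Txpre Δ (fun i => by rw [← hσ i i.isLt, finArgs_of_lt]) r.out r.q

end Encoding

def SilentDetPopping (Δ : Set (PRule (Fin m) Act Γ)) : Prop :=
  ∀ r ∈ Δ, r.a = none → (∀ r' ∈ Δ, r'.p = r.p → r'.Y = r.Y → r' = r) ∧ r.out = []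

section SilentDetPopping

variable {Δ : Set (PRule (Fin m) Act Γ)}

lemma SilentDetPopping.not_unstable (hΔ : SilentDetPopping Δ) {r : PRule (Fin m) Act Γ}
    (hr : r ∈ Δ) {a : Act} (ha : r.a = some a) : ¬ Unstable Δ r.p r.Y := by
  rintro ⟨rε, hrε, hp, hY, hsilent⟩
  have := (hΔ rε hrε hsilent).1 r hr hp.symm hY.symm
  simp_all

lemma SilentDetPopping.Tpre_eq_of_pstep_none (hΔ : SilentDetPopping Δ)
    {s s' : Fin m × List Γ} (h : pstep Δ none s s') : Tpre Δ s.2 s.1 = Tpre Δ s'.2 s'.1 := by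
  obtain ⟨r, hr, ha, γ, rfl, rfl⟩ := h
  have hu : Unstable Δ r.p r.Y := ⟨r, hr, rfl, rfl, ha⟩
  obtain ⟨hchosen, hp, hY, -⟩ := hu.choose_spec
  have hchoose : hu.choose = r := (hΔ r hr ha).1 _ hchosen hp hY
  rw [Tpre_cons_of_unstable Δ hu, hchoose, (hΔ r hr ha).2, List.nil_append]

lemma SilentDetPopping.gstepP_of_pstep_some (hΔ : SilentDetPopping Δ)
    {s s' : Fin m × List Γ} {a : Act} (h : pstep Δ (some a) s s') :
    gstepP (GMpre Δ) a (Tpre Δ s.2 s.1) (Tpre Δ s'.2 s'.1) := by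
  obtain ⟨r, hr, ha, γ, rfl, rfl⟩ := h
  refine ⟨_, ⟨r, hr, a, ha, rfl⟩, rfl, finArgs (Tpre Δ γ), ?_, ?_⟩
  · exact Tpre_cons_of_stable Δ (hΔ.not_unstable hr ha) γ
  · exact (substPre_Txpre Δ (fun i => finArgs_of_lt _ i.isLt) r.out r.q).symm

lemma SilentDetPopping.exists_wstep_of_gstepP (hΔ : SilentDetPopping Δ) {a : Act}
    {E : PreTerm (NtM m Γ)} (γ : List Γ) (p : Fin m)
    (hstep : gstepP (GMpre Δ) a (Tpre Δ γ p) E) :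
    ∃ s', wstep (pstep Δ) (some a) (p, γ) s' ∧ E = Tpre Δ s'.2 s'.1 := by
  induction γ generalizing p with
  | nil =>
    obtain ⟨_, ⟨r, -, _, -, rfl⟩, -, σ, hsrc, -⟩ := hstep
    nomatch congrFun hsrc []
  | cons Y γ ih =>
    by_cases h : Unstable Δ p Y
    · rw [Tpre_cons_of_unstable Δ h] at hstep
      obtain ⟨s', ⟨u, v, hu, huv, hvs'⟩, rfl⟩ := ih _ hstep
      obtain ⟨hchosen, hp, hY, ha⟩ := h.choose_spec
      have hpop : pstep Δ none (p, Y :: γ) (h.choose.q, γ) :=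
        ⟨_, hchosen, ha, γ, by rw [hp, hY], by rw [(hΔ _ hchosen ha).2, List.nil_append]⟩
      exact ⟨s', ⟨u, v, .head hpop hu, huv, hvs'⟩, rfl⟩
    · obtain ⟨s', hs', rfl⟩ := exists_pstep_of_gstepP_stable Δ h hstep
      exact ⟨s', ⟨_, s', .refl, hs', .refl⟩, rfl⟩

end SilentDetPopping

end PDS2G

open FOG PDS PDS2G in
theorem pds_eps_to_grammar_correct_general (m : ℕ) (Act Γ : Type)
    (Δ : Set (PRule (Fin m) Act Γ))
    (hdet : ∀ r ∈ Δ, r.a = none →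
      (∀ r' ∈ Δ, r'.p = r.p → r'.Y = r.Y → r' = r) ∧ r.out = []) :
    ∀ (p : Fin m) (γ : List Γ) (q : Fin m) (γ' : List Γ),
      WeakBisim (pstep Δ) (p, γ) (q, γ') ↔
      Bisim (gstepP (GMpre Δ)) (Tpre Δ γ p) (Tpre Δ γ' q) := by
  have hΔ : SilentDetPopping Δ := hdet
  intro p γ q γ'
  exact weakBisim_iff_bisim_of_collapse (T := fun s => Tpre Δ s.2 s.1)
    (fun _ _ => hΔ.Tpre_eq_of_pstep_none) (fun _ _ _ => hΔ.gstepP_of_pstep_some)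
    (fun _ s _ => hΔ.exists_wstep_of_gstepP s.2 s.1) (p, γ) (q, γ')

open FOG PDS PDS2G in
/-- Let `M = (Q,Σ,Γ,Δ)` be a pushdown system whose `ε`-rules are
all deterministic and popping, with `Q = {q₁,…,q_m}`, and let `G_M` be the
first-order grammar obtained by the translation that preprocesses silent steps.
Then for all configurations: `pγ ≈ qγ'` in `L_M` iff `T(pγ) ∼ T(qγ')` in
`L_{G_M}`. -/
theorem pds_eps_to_grammar_correct (m : ℕ) (Act Γ : Type)
    (hAct : Finite Act) (hΓ : Finite Γ)
    (Δ : Set (PRule (Fin m) Act Γ)) (hΔ : Δ.Finite)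
    (hdet : ∀ r ∈ Δ, r.a = none →
      (∀ r' ∈ Δ, r'.p = r.p → r'.Y = r.Y → r' = r) ∧ r.out = []) :
    ∀ (p : Fin m) (γ : List Γ) (q : Fin m) (γ' : List Γ),
      WeakBisim (pstep Δ) (p, γ) (q, γ') ↔
      Bisim (gstepP (GMpre Δ)) (Tpre Δ γ p) (Tpre Δ γ' q) :=
  pds_eps_to_grammar_correct_general m Act Γ Δ hdet
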